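/- Let $K$ be the nerve of the cyclic group of order $2$ (a simplicial model of $\mathbb{RP}^\infty$). Then the normalized chain complex $C_k K$ is free of rank one on a generator $z_k$ for each $k \geq 0$, the differential vanishes after tensoring with $\mathbb{F}_2$, the comultiplication satisfies $\Delta(z_k) = \sum_{i=0}^{k} z_i \otimes z_{k-i}$, and therefore $C_*K \otimes \mathbb{F}_2$ is a cocommutative chain coalgebra. -/

import Mathlib

/-!
A simplex `(g₁, …, gₖ)` of the nerve of `ℤ/2` is degenerate exactly when some `gᵢ = 0`, so
`(1, …, 1)` is the only nondegenerate `k`-simplex and its class `z_k` is a basis of `C_k`,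
detected by the coefficient of `(1, …, 1)`. The inner faces of `(1, …, 1)` contain the entry
`1 + 1 = 0`, while the outer faces `d₀` and `d_{k+1}` are again `(1, …, 1)`; hence
`d z_{k+1} = (1 + (-1)^{k+1}) z_k`, which is even. Front and back faces of `(1, …, 1)` are again
`(1, …, 1)`, so `Δ z_k = ∑ z_i ⊗ z_{k-i}`, and the Koszul sign `(-1)^{ij}` of the symmetry is `1`
mod 2.
-/

open TensorProduct

noncomputable section

/-- `n`-simplices of the nerve of the cyclic group `ℤ/2` of order two: tuples in `(ℤ/2)^n`. -/
abbrev NerveZ2 (n : ℕ) : Type := Fin n → ZMod 2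

/-- The face maps of the nerve of the group `ℤ/2` (written additively):
`d₀` drops the first entry, `dₙ` the last, and `dᵢ` adds two adjacent entries. -/
def nerveFace (n : ℕ) (i : ℕ) (σ : NerveZ2 (n + 1)) : NerveZ2 n := fun j =>
  if i = 0 then σ ⟨(j : ℕ) + 1, by have := j.isLt; omega⟩
  else if i ≤ n then
    (if (j : ℕ) + 1 < i then σ ⟨(j : ℕ), by have := j.isLt; omega⟩
     else if (j : ℕ) + 1 = i then
       σ ⟨(j : ℕ), by have := j.isLt; omega⟩ + σ ⟨(j : ℕ) + 1, by have := j.isLt; omega⟩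
     else σ ⟨(j : ℕ) + 1, by have := j.isLt; omega⟩)
  else σ ⟨(j : ℕ), by have := j.isLt; omega⟩

/-- The degeneracy maps of the nerve, inserting the neutral element `0`. -/
def nerveDegen (n : ℕ) (i : ℕ) (hi : i ≤ n) (σ : NerveZ2 n) : NerveZ2 (n + 1) := fun j =>
  if hlt : (j : ℕ) < i then σ ⟨(j : ℕ), by omega⟩
  else if heq : (j : ℕ) = i then 0
  else σ ⟨(j : ℕ) - 1, by have := j.isLt; omega⟩

/-- Degenerate simplices of the nerve. -/
def IsDegen : ∀ n, NerveZ2 n → Prop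
  | 0 => fun _ => False
  | m + 1 => fun σ => ∃ (i : ℕ) (hi : i ≤ m) (τ : NerveZ2 m), σ = nerveDegen m i hi τ

/-- Free abelian group on the `n`-simplices. -/
abbrev Chains (n : ℕ) : Type := NerveZ2 n →₀ ℤ

/-- The subgroup generated by degenerate simplices. -/
def DegSub (n : ℕ) : Submodule ℤ (Chains n) :=
  Submodule.span ℤ {v | ∃ σ, IsDegen n σ ∧ v = Finsupp.single σ 1}

/-- The normalized chains of the nerve of `ℤ/2`: chains modulo degenerate simplices. -/
abbrev NormChains (n : ℕ) : Type := Chains n ⧸ DegSub n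

/-- The class `z_k` of the unique nondegenerate `k`-simplex `(1,1,…,1)`. -/
def zgen (k : ℕ) : NormChains k :=
  Submodule.Quotient.mk (Finsupp.single (fun _ => (1 : ZMod 2)) 1)

/-- The simplicial differential (alternating sum of faces) on unnormalized chains. -/
def Dfree (n : ℕ) : Chains (n + 1) →ₗ[ℤ] Chains n :=
  Finsupp.lift (Chains n) ℤ (NerveZ2 (n + 1))
    (fun σ => ∑ i ∈ Finset.range (n + 2), ((-1 : ℤ) ^ i) • Finsupp.single (nerveFace n i σ) 1)

/-- The `i`-th front face of a `k`-simplex. -/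
def frontFace (i k : ℕ) (h : i ≤ k) (σ : NerveZ2 k) : NerveZ2 i :=
  fun j => σ ⟨(j : ℕ), by have := j.isLt; omega⟩

/-- The `j`-th back face of a `k`-simplex, `i + j = k`. -/
def backFace (i j k : ℕ) (h : i + j = k) (σ : NerveZ2 k) : NerveZ2 j :=
  fun j' => σ ⟨i + (j' : ℕ), by have := j'.isLt; omega⟩

lemma nerveDegen_apply (n i : ℕ) (hi : i ≤ n) (σ : NerveZ2 n) (a : ℕ) (ha : a < n + 1) :
    nerveDegen n i hi σ ⟨a, ha⟩ =
      if h : a < i then σ ⟨a, by omega⟩ else if h' : a = i then 0 else σ ⟨a - 1, by omega⟩ := by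
  simp only [nerveDegen]

theorem isDegen_iff_exists_eq_zero {n : ℕ} (σ : NerveZ2 n) : IsDegen n σ ↔ ∃ q, σ q = 0 := by
  cases n with
  | zero => exact ⟨False.elim, fun ⟨q, _⟩ => q.elim0⟩
  | succ m =>
    constructor
    · rintro ⟨i, hi, τ, rfl⟩
      exact ⟨⟨i, by omega⟩, by simp [nerveDegen_apply]⟩
    · rintro ⟨q, hq⟩
      refine ⟨q, by omega, q.removeNth σ, funext fun ⟨a, ha⟩ => ?_⟩
      rw [nerveDegen_apply]
      split_ifs with hlt heq
      · rw [Fin.removeNth_apply, Fin.succAbove_of_castSucc_lt _ _ (by simpa [Fin.lt_def])]; rfl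
      · rwa [← Fin.ext (a := q) (b := ⟨a, ha⟩) heq.symm]
      · rw [Fin.removeNth_apply, Fin.succAbove_of_le_castSucc _ _ (by simp [Fin.le_def]; omega)]
        congr 1; ext; simp; omega

lemma degSub_le_ker {M : Type*} [AddCommGroup M] {n : ℕ} (f : Chains n →ₗ[ℤ] M)
    (hf : ∀ σ, IsDegen n σ → f (Finsupp.single σ 1) = 0) : DegSub n ≤ LinearMap.ker f :=
  Submodule.span_le.mpr <| by rintro _ ⟨σ, hσ, rfl⟩; exact hf σ hσ

lemma mk_single_eq_zero_of_apply_eq_zero {n : ℕ} {σ : NerveZ2 n} {q : Fin n} (hq : σ q = 0) :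
    (Submodule.Quotient.mk (Finsupp.single σ 1) : NormChains n) = 0 :=
  (Submodule.Quotient.mk_eq_zero _).2 <|
    Submodule.subset_span ⟨σ, (isDegen_iff_exists_eq_zero σ).2 ⟨q, hq⟩, rfl⟩

def coeffOnes (n : ℕ) : NormChains n →ₗ[ℤ] ℤ :=
  (DegSub n).liftQ (Finsupp.lapply fun _ => 1) <| degSub_le_ker _ fun σ hσ => by
    obtain ⟨q, hq⟩ := (isDegen_iff_exists_eq_zero σ).1 hσ
    have hne : σ ≠ fun _ => 1 := fun h => by simp [h] at hq
    simp [hne]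

lemma coeffOnes_zgen (k : ℕ) : coeffOnes k (zgen k) = 1 := by
  simp [coeffOnes, zgen]

lemma eq_zero_of_smul_zgen_eq_zero {k : ℕ} {c : ℤ} (h : c • zgen k = 0) : c = 0 := by
  simpa [coeffOnes_zgen] using congrArg (coeffOnes k) h

lemma mk_single_mem_span_zgen {k : ℕ} (σ : NerveZ2 k) :
    (Submodule.Quotient.mk (Finsupp.single σ 1) : NormChains k) ∈ Submodule.span ℤ {zgen k} := by
  by_cases h : ∃ q, σ q = 0
  · obtain ⟨q, hq⟩ := h
    rw [mk_single_eq_zero_of_apply_eq_zero hq]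
    exact Submodule.zero_mem _
  · have hσ : σ = fun _ => 1 := funext fun q => by
      have : ∀ x : ZMod 2, x ≠ 0 → x = 1 := by decide
      exact this _ fun hq => h ⟨q, hq⟩
    exact hσ ▸ Submodule.mem_span_singleton_self _

lemma span_zgen_eq_top (k : ℕ) : Submodule.span ℤ {zgen k} = ⊤ := by
  refine Submodule.eq_top_iff'.2 fun x => ?_
  obtain ⟨c, rfl⟩ := Submodule.Quotient.mk_surjective _ x
  induction c using Finsupp.induction_linear with
  | zero => exact Submodule.zero_mem _
  | add f g hf hg => exact Submodule.add_mem _ hf hg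
  | single σ b =>
    rw [← mul_one b, ← smul_eq_mul, ← Finsupp.smul_single, Submodule.Quotient.mk_smul]
    exact Submodule.smul_mem _ _ (mk_single_mem_span_zgen σ)

lemma nerveFace_eq_nerveFace_succ {n : ℕ} {σ : NerveZ2 (n + 1)} {q : Fin (n + 1)}
    (hq : σ q = 0) : nerveFace n q σ = nerveFace n (q + 1 : ℕ) σ := by
  have hq' : ∀ a (ha : a < n + 1), a = q → σ ⟨a, ha⟩ = 0 := by rintro a ha rfl; exact hq
  funext ⟨a, ha⟩
  simp only [nerveFace]
  split_ifs <;> first | omega | contradiction | rfl | simp (disch := omega) [hq']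

lemma exists_nerveFace_apply_eq_zero {n : ℕ} {σ : NerveZ2 (n + 1)} {q : Fin (n + 1)}
    (hq : σ q = 0) {i : ℕ} (hi : i < n + 2) (hiq : i ≠ q) (hiq' : i ≠ q + 1) :
    ∃ r, nerveFace n i σ r = 0 := by
  -- deleting or merging entries away from position `q` keeps the zero entry, shifted left if `i < q`
  by_cases hlt : i < q
  · have hq' : ∀ a (ha : a < n + 1), a = q → σ ⟨a, ha⟩ = 0 := by rintro a ha rfl; exact hq
    refine ⟨⟨q - 1, by omega⟩, ?_⟩
    simp only [nerveFace]
    split_ifs <;> first | omega | simp (disch := omega) [hq']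
  · refine ⟨⟨q, by omega⟩, ?_⟩
    simp only [nerveFace]
    split_ifs <;> omega

lemma Dfree_single (n : ℕ) (σ : NerveZ2 (n + 1)) :
    Dfree n (Finsupp.single σ 1) =
      ∑ i ∈ Finset.range (n + 2), (-1 : ℤ) ^ i • Finsupp.single (nerveFace n i σ) 1 := by
  simp [Dfree]

lemma mkQ_Dfree_single_of_isDegen {n : ℕ} {σ : NerveZ2 (n + 1)} (hσ : IsDegen (n + 1) σ) :
    (DegSub n).mkQ (Dfree n (Finsupp.single σ 1)) = 0 := by
  obtain ⟨q, hq⟩ := (isDegen_iff_exists_eq_zero σ).1 hσ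
  have hpair : ({(q : ℕ), (q : ℕ) + 1} : Finset ℕ) ⊆ Finset.range (n + 2) := by
    intro i; simp only [Finset.mem_insert, Finset.mem_singleton, Finset.mem_range]; omega
  rw [Dfree_single, map_sum, ← Finset.sum_subset hpair, Finset.sum_pair (by omega)]
  · rw [nerveFace_eq_nerveFace_succ hq, pow_succ, mul_neg_one, neg_smul, map_neg, add_neg_cancel]
  · intro i hi hiq
    simp only [Finset.mem_insert, Finset.mem_singleton, not_or] at hiq
    obtain ⟨r, hr⟩ := exists_nerveFace_apply_eq_zero hq (Finset.mem_range.1 hi) hiq.1 hiq.2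
    rw [map_smul, Submodule.mkQ_apply, mk_single_eq_zero_of_apply_eq_zero hr, smul_zero]

def Dnorm (n : ℕ) : NormChains (n + 1) →ₗ[ℤ] NormChains n :=
  (DegSub (n + 1)).liftQ ((DegSub n).mkQ ∘ₗ Dfree n) <|
    degSub_le_ker _ fun _ hσ => mkQ_Dfree_single_of_isDegen hσ

lemma Dnorm_comp_mkQ (n : ℕ) : Dnorm n ∘ₗ (DegSub (n + 1)).mkQ = (DegSub n).mkQ ∘ₗ Dfree n :=
  Submodule.liftQ_mkQ _ _ _

lemma nerveFace_zero_ones (n : ℕ) : nerveFace n 0 (fun _ => 1) = fun _ => 1 := rfl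

lemma nerveFace_last_ones (n : ℕ) : nerveFace n (n + 1) (fun _ => 1) = fun _ => 1 := by
  funext j
  simp [nerveFace]

lemma nerveFace_ones_apply_eq_zero {n i : ℕ} (hi : 1 ≤ i) (hin : i ≤ n) :
    nerveFace n i (fun _ => 1) ⟨i - 1, by omega⟩ = 0 := by
  simp only [nerveFace]
  split_ifs <;> first | omega | decide

lemma Dnorm_zgen (n : ℕ) : Dnorm n (zgen (n + 1)) = (1 + (-1 : ℤ) ^ (n + 1)) • zgen n := by
  have hends : ({0, n + 1} : Finset ℕ) ⊆ Finset.range (n + 2) := by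
    intro i; simp only [Finset.mem_insert, Finset.mem_singleton, Finset.mem_range]; omega
  rw [zgen, ← Submodule.mkQ_apply, ← LinearMap.comp_apply, Dnorm_comp_mkQ, LinearMap.comp_apply,
    Dfree_single, map_sum, ← Finset.sum_subset hends, Finset.sum_pair (by omega)]
  · rw [nerveFace_zero_ones, nerveFace_last_ones, pow_zero, one_smul, add_smul, one_smul,
      map_smul]
    rfl
  · intro i hi hends
    simp only [Finset.mem_insert, Finset.mem_singleton, not_or] at hends
    have hz := nerveFace_ones_apply_eq_zero (n := n) (i := i) (by omega)
      (by have := Finset.mem_range.1 hi; omega)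
    rw [map_smul, Submodule.mkQ_apply, mk_single_eq_zero_of_apply_eq_zero hz, smul_zero]

section ModTwo

variable {M : Type*} [AddCommGroup M]

lemma exists_one_add_neg_one_pow_smul_eq_two_smul (m : ℕ) (x : M) :
    ∃ w : M, (1 + (-1 : ℤ) ^ m) • x = (2 : ℤ) • w := by
  rcases Nat.even_or_odd m with hm | hm
  · exact ⟨x, by rw [hm.neg_one_pow]; rfl⟩
  · exact ⟨0, by rw [hm.neg_one_pow, add_neg_cancel, zero_smul, smul_zero]⟩

lemma exists_sub_neg_one_pow_smul_eq_two_smul (m : ℕ) (x : M) :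
    ∃ w : M, x - (-1 : ℤ) ^ m • x = (2 : ℤ) • w := by
  rcases Nat.even_or_odd m with hm | hm
  · exact ⟨0, by rw [hm.neg_one_pow, one_smul, sub_self, smul_zero]⟩
  · exact ⟨x, by rw [hm.neg_one_pow, neg_one_smul, sub_neg_eq_add, two_smul]⟩

end ModTwo

def awChains (i j k : ℕ) (h : i + j = k) : Chains k →ₗ[ℤ] NormChains i ⊗[ℤ] NormChains j :=
  Finsupp.lift _ ℤ _ fun σ =>
    (Submodule.Quotient.mk (Finsupp.single (frontFace i k (Nat.le.intro h) σ) 1) : NormChains i) ⊗ₜ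
      (Submodule.Quotient.mk (Finsupp.single (backFace i j k h σ) 1) : NormChains j)

lemma awChains_single (i j k : ℕ) (h : i + j = k) (σ : NerveZ2 k) :
    awChains i j k h (Finsupp.single σ 1) =
      (Submodule.Quotient.mk (Finsupp.single (frontFace i k (Nat.le.intro h) σ) 1) :
          NormChains i) ⊗ₜ
        (Submodule.Quotient.mk (Finsupp.single (backFace i j k h σ) 1) : NormChains j) := by
  simp [awChains]

lemma awChains_single_of_apply_eq_zero {i j k : ℕ} (h : i + j = k) {σ : NerveZ2 k} {q : Fin k}
    (hq : σ q = 0) : awChains i j k h (Finsupp.single σ 1) = 0 := by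
  rw [awChains_single]
  by_cases hqi : (q : ℕ) < i
  · rw [mk_single_eq_zero_of_apply_eq_zero (q := ⟨q, hqi⟩) hq, zero_tmul]
  · have hq' : backFace i j k h σ ⟨q - i, by omega⟩ = 0 := by
      rw [← hq]; simp only [backFace]; congr; omega
    rw [mk_single_eq_zero_of_apply_eq_zero hq', tmul_zero]

def awNorm (i j k : ℕ) (h : i + j = k) : NormChains k →ₗ[ℤ] NormChains i ⊗[ℤ] NormChains j :=
  (DegSub k).liftQ (awChains i j k h) <| degSub_le_ker _ fun σ hσ => by
    obtain ⟨q, hq⟩ := (isDegen_iff_exists_eq_zero σ).1 hσ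
    exact awChains_single_of_apply_eq_zero h hq

lemma awNorm_mk (i j k : ℕ) (h : i + j = k) (σ : NerveZ2 k) :
    awNorm i j k h (Submodule.Quotient.mk (Finsupp.single σ 1)) =
      (Submodule.Quotient.mk (Finsupp.single (frontFace i k (Nat.le.intro h) σ) 1) :
          NormChains i) ⊗ₜ
        (Submodule.Quotient.mk (Finsupp.single (backFace i j k h σ) 1) : NormChains j) :=
  awChains_single i j k h σ

lemma awNorm_zgen (i j k : ℕ) (h : i + j = k) : awNorm i j k h (zgen k) = zgen i ⊗ₜ zgen j :=
  awNorm_mk i j k h _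

/-- Let `K` be the nerve of the cyclic group of order `2` (a simplicial
model of `ℝP^∞`).  Then the normalized chain complex `C_k K` is free of rank one on the
generator `z_k` (the class of `(1,…,1)`), the differential vanishes after tensoring with
`𝔽₂` (indeed `d z_{k+1} = (1 + (-1)^{k+1}) z_k`), the Alexander–Whitney comultiplication
satisfies `Δ(z_k) = ∑_{i=0}^k z_i ⊗ z_{k-i}`, and therefore `C_*K ⊗ 𝔽₂` is a cocommutative
chain coalgebra. -/
theorem nerve_z2_normalized_chains :
    -- `C_k K` is free of rank one on `z_k`
    (∀ k, Submodule.span ℤ {zgen k} = ⊤ ∧ ∀ c : ℤ, c • zgen k = 0 → c = 0) ∧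
    -- the induced differential, and its vanishing mod 2
    (∃ Dbar : ∀ n, NormChains (n + 1) →ₗ[ℤ] NormChains n,
      (∀ n, (Dbar n).comp (DegSub (n + 1)).mkQ = (DegSub n).mkQ.comp (Dfree n)) ∧
      (∀ n, Dbar n (zgen (n + 1)) = ((1 + (-1 : ℤ) ^ (n + 1))) • zgen n) ∧
      (∀ n, ∃ w : NormChains n, Dbar n (zgen (n + 1)) = (2 : ℤ) • w)) ∧
    -- the Alexander–Whitney comultiplication and its cocommutativity mod 2
    (∃ Δbar : ∀ i j k : ℕ, i + j = k → NormChains k →ₗ[ℤ] NormChains i ⊗[ℤ] NormChains j,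
      (∀ (i j k : ℕ) (h : i + j = k) (σ : NerveZ2 k),
        Δbar i j k h (Submodule.Quotient.mk (Finsupp.single σ 1))
          = (Submodule.Quotient.mk
                (Finsupp.single (frontFace i k (by omega) σ) 1) : NormChains i) ⊗ₜ[ℤ]
            (Submodule.Quotient.mk (Finsupp.single (backFace i j k h σ) 1) : NormChains j)) ∧
      (∀ (i j k : ℕ) (h : i + j = k), Δbar i j k h (zgen k) = zgen i ⊗ₜ[ℤ] zgen j) ∧
      (∀ (i j k : ℕ) (h : i + j = k) (h' : j + i = k),
        ∃ w : NormChains i ⊗[ℤ] NormChains j,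
          (TensorProduct.comm ℤ (NormChains j) (NormChains i)).toLinearMap
              (Δbar j i k h' (zgen k))
            - ((-1 : ℤ) ^ (i * j)) • Δbar i j k h (zgen k) = (2 : ℤ) • w)) := by
  refine ⟨fun k => ⟨span_zgen_eq_top k, fun _ => eq_zero_of_smul_zgen_eq_zero⟩,
    ⟨Dnorm, Dnorm_comp_mkQ, Dnorm_zgen, fun n => ?_⟩, ⟨awNorm, awNorm_mk, awNorm_zgen, ?_⟩⟩
  · rw [Dnorm_zgen]
    exact exists_one_add_neg_one_pow_smul_eq_two_smul _ _
  · intro i j k h h'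
    rw [awNorm_zgen, awNorm_zgen, LinearEquiv.coe_coe, TensorProduct.comm_tmul]
    exact exists_sub_neg_one_pow_smul_eq_two_smul _ _

end
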